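/- arXiv:1402.1792 — 3 statements merged into one kernel-verified Lean document; each statement's English description precedes it below -/
import Mathlib

section
/- Fix γ > 0 and η ∈ (0, 1). The function g(z) = ((1+η)/2)·φ(z; γ) + ((1−η)/2)·φ(−z; γ), where φ is the smoothed hinge loss, attains its minimum at the unique point z* satisfying exp(−γ z*) = (−η·e^γ + √(η²·e^{2γ} + 1 − η²))/(1 + η), and moreover z* > 0. -/
/-!
The derivative of `g` is `(1 - η)/2 · σ(γ(1 + z)) - (1 + η)/2 · σ(γ(1 - z))` with `σ` the logistic
sigmoid, a nondecreasing function of `z`; hence `g` is minimal exactly where it vanishes. In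
`u = exp (-γ z)` this critical-point equation is the quadratic
`(1 + η) u² + 2 η e^γ u - (1 - η) = 0`, whose positive root is the stated one.
Since `g'(0) = -η σ(γ) < 0`, the minimizer is positive.
-/

open Real Set

lemma hasDerivAt_log_one_add_exp (t : ℝ) :
    HasDerivAt (fun t => log (1 + exp t)) (sigmoid t) t := by
  convert ((hasDerivAt_exp t).const_add 1).log (by positivity) using 1
  rw [sigmoid_def, exp_neg]
  field_simp
  ring

theorem isMinOn_univ_of_hasDerivAt_of_monotone {f f' : ℝ → ℝ} (hf : ∀ x, HasDerivAt f (f' x) x)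
    (hf' : Monotone f') {x₀ : ℝ} (h : f' x₀ = 0) : IsMinOn f univ x₀ := by
  have hdiff : DifferentiableOn ℝ f univ :=
    fun x _ => (hf x).differentiableAt.differentiableWithinAt
  refine isMinOn_univ_of_deriv (hf x₀).continuousAt (hdiff.mono (subset_univ _))
    (hdiff.mono (subset_univ _)) (fun x hx => ?_) (fun x hx => ?_) <;> rw [(hf x).deriv, ← h]
  · exact hf' hx.le
  · exact hf' hx.le

lemma quadratic_positive_root {η E c : ℝ} (hη : η ∈ Ioo (-1) 1)
    (hc : c = (-η * E + √(η ^ 2 * E ^ 2 + 1 - η ^ 2)) / (1 + η)) :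
    0 < c ∧ (1 + η) * (c * c) + 2 * η * E * c - (1 - η) = 0 := by
  obtain ⟨hη₀, hη₁⟩ := hη
  have hD : 0 ≤ η ^ 2 * E ^ 2 + 1 - η ^ 2 := by nlinarith
  have hroot := (quadratic_eq_zero_iff (a := 1 + η) (b := 2 * η * E) (c := -(1 - η))
    (by linarith) (s := 2 * √(η ^ 2 * E ^ 2 + 1 - η ^ 2)) ?_ c).mpr (.inl ?_)
  · refine ⟨?_, by linarith⟩
    rw [hc]
    refine div_pos ?_ (by linarith)
    have : |η * E| < √(η ^ 2 * E ^ 2 + 1 - η ^ 2) := by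
      rw [← sqrt_sq_eq_abs]
      exact sqrt_lt_sqrt (sq_nonneg _) (by nlinarith)
    linarith [le_abs_self (η * E)]
  · rw [discrim, mul_mul_mul_comm, mul_self_sqrt hD]; ring
  · rw [hc]; field_simp

noncomputable def smoothHinge (γ z : ℝ) : ℝ := 1 / γ * log (1 + exp (γ * (1 - z)))

noncomputable def condRisk (γ η z : ℝ) : ℝ :=
  (1 + η) / 2 * smoothHinge γ z + (1 - η) / 2 * smoothHinge γ (-z)

noncomputable def condRiskDeriv (γ η z : ℝ) : ℝ :=
  (1 - η) / 2 * sigmoid (γ * (1 + z)) - (1 + η) / 2 * sigmoid (γ * (1 - z))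

section

variable {γ η : ℝ}

lemma hasDerivAt_smoothHinge (hγ : γ ≠ 0) (z : ℝ) :
    HasDerivAt (smoothHinge γ) (-sigmoid (γ * (1 - z))) z := by
  have hlin : HasDerivAt (fun z => γ * (1 - z)) (-γ) z := by
    simpa using ((hasDerivAt_id z).const_sub 1).const_mul γ
  exact (((hasDerivAt_log_one_add_exp _).comp z hlin).const_mul (1 / γ)).congr_deriv
    (by field_simp)

lemma hasDerivAt_condRisk (hγ : γ ≠ 0) (z : ℝ) :
    HasDerivAt (condRisk γ η) (condRiskDeriv γ η z) z := by
  have hneg := (hasDerivAt_smoothHinge hγ (-z)).comp z (hasDerivAt_neg z)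
  exact (((hasDerivAt_smoothHinge hγ z).const_mul ((1 + η) / 2)).add
    (hneg.const_mul ((1 - η) / 2))).congr_deriv
      (by simp only [condRiskDeriv, sub_neg_eq_add]; ring)

lemma condRiskDeriv_monotone (hγ : 0 ≤ γ) (hη : η ∈ Icc (-1) 1) :
    Monotone (condRiskDeriv γ η) := by
  obtain ⟨hη₀, hη₁⟩ := hη
  intro x y hxy
  have hup : sigmoid (γ * (1 + x)) ≤ sigmoid (γ * (1 + y)) := sigmoid_le (by gcongr)
  have hdown : sigmoid (γ * (1 - y)) ≤ sigmoid (γ * (1 - x)) := sigmoid_le (by gcongr)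
  unfold condRiskDeriv
  gcongr
  linarith

lemma condRiskDeriv_zero : condRiskDeriv γ η 0 = -η * sigmoid γ := by
  simp only [condRiskDeriv, add_zero, sub_zero, mul_one]
  ring

lemma condRiskDeriv_eq (γ η z : ℝ) :
    condRiskDeriv γ η z =
      -(exp γ / 2) * ((1 + η) * (exp (-(γ * z)) * exp (-(γ * z))) +
          2 * η * exp γ * exp (-(γ * z)) - (1 - η)) /
        ((exp γ + exp (-(γ * z))) * (exp γ * exp (-(γ * z)) + 1)) := by
  have hup : exp (-(γ * (1 + z))) = exp (-(γ * z)) / exp γ := by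
    rw [← exp_sub]; ring_nf
  have hdown : exp (-(γ * (1 - z))) = 1 / (exp γ * exp (-(γ * z))) := by
    rw [← exp_add, one_div, ← exp_neg]; ring_nf
  simp only [condRiskDeriv, sigmoid_def, hup, hdown]
  field_simp
  ring

lemma pos_of_condRiskDeriv_eq_zero (hγ : 0 ≤ γ) (hη : η ∈ Ioc 0 1) {z₀ : ℝ}
    (h : condRiskDeriv γ η z₀ = 0) : 0 < z₀ := by
  by_contra! hz
  have := condRiskDeriv_monotone hγ ⟨by linarith [hη.1], hη.2⟩ hz
  rw [h, condRiskDeriv_zero] at this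
  nlinarith [sigmoid_pos γ, hη.1]

end

theorem conditional_risk_minimizer (γ η : ℝ) (hγ : 0 < γ) (hη : η ∈ Set.Ioo (0:ℝ) 1) :
    ∃! zs : ℝ,
      Real.exp (-(γ * zs)) =
        (-η * Real.exp γ + Real.sqrt (η ^ 2 * Real.exp (2 * γ) + 1 - η ^ 2)) / (1 + η) ∧
      (∀ z : ℝ,
        ((1 + η) / 2) * ((1 / γ) * Real.log (1 + Real.exp (γ * (1 - zs)))) +
          ((1 - η) / 2) * ((1 / γ) * Real.log (1 + Real.exp (γ * (1 + zs)))) ≤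
        ((1 + η) / 2) * ((1 / γ) * Real.log (1 + Real.exp (γ * (1 - z)))) +
          ((1 - η) / 2) * ((1 / γ) * Real.log (1 + Real.exp (γ * (1 + z))))) ∧
      0 < zs := by
  obtain ⟨hη₀, hη₁⟩ := hη
  have hexp2 : exp (2 * γ) = exp γ ^ 2 := by exact_mod_cast exp_nat_mul γ 2
  rw [hexp2]
  set c := (-η * exp γ + √(η ^ 2 * exp γ ^ 2 + 1 - η ^ 2)) / (1 + η) with hc
  obtain ⟨hc₀, hquad⟩ := quadratic_positive_root ⟨by linarith, hη₁⟩ hc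
  set zs := -log c / γ
  have hzs : exp (-(γ * zs)) = c := by
    rw [show -(γ * zs) = log c by simp only [zs]; field_simp, exp_log hc₀]
  have hcrit : condRiskDeriv γ η zs = 0 := by
    rw [condRiskDeriv_eq, hzs, hquad, mul_zero, zero_div]
  have hmin := isMinOn_univ_iff.mp <| isMinOn_univ_of_hasDerivAt_of_monotone
    (hasDerivAt_condRisk hγ.ne') (condRiskDeriv_monotone hγ.le ⟨by linarith, hη₁.le⟩) hcrit
  refine ⟨zs, ⟨hzs, ?_, pos_of_condRiskDeriv_eq_zero hγ.le ⟨hη₀, hη₁.le⟩ hcrit⟩, ?_⟩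
  · simpa only [condRisk, smoothHinge, sub_neg_eq_add] using hmin
  · rintro y ⟨hy, -, -⟩
    rw [← hzs] at hy
    exact mul_left_cancel₀ hγ.ne' (neg_injective (exp_injective hy))
end

section
/- For η ∈ [0, 1], one has inf over real α with α(2η − 1) ≤ 0 of [η·max(0, 1−α) + (1−η)·max(0, 1+α)] minus inf over all real α of the same expression equals |2η − 1|. Equivalently, the ψ-transform of the hinge loss is ψ(z) = |z|. -/
theorem psi_transform_hinge (η : ℝ) (hη : η ∈ Set.Icc (0:ℝ) 1) :
    sInf ((fun α : ℝ => η * max 0 (1 - α) + (1 - η) * max 0 (1 + α)) ''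
        {α : ℝ | α * (2 * η - 1) ≤ 0}) -
      sInf ((fun α : ℝ => η * max 0 (1 - α) + (1 - η) * max 0 (1 + α)) '' Set.univ) =
    |2 * η - 1| := by
  obtain ⟨h0, h1⟩ := hη
  set f : ℝ → ℝ := fun α => η * max 0 (1 - α) + (1 - η) * max 0 (1 + α) with hf
  have key : ∀ α : ℝ, 1 - α * (2 * η - 1) ≤ f α ∧ 2 * min η (1 - η) ≤ f α := by
    intro α
    have ha1 : 1 - α ≤ max 0 (1 - α) := le_max_right _ _
    have ha0 : (0:ℝ) ≤ max 0 (1 - α) := le_max_left _ _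
    have hb1 : 1 + α ≤ max 0 (1 + α) := le_max_right _ _
    have hb0 : (0:ℝ) ≤ max 0 (1 + α) := le_max_left _ _
    constructor
    · simp only [hf]
      nlinarith [mul_le_mul_of_nonneg_left ha1 h0,
        mul_le_mul_of_nonneg_left hb1 (by linarith : (0:ℝ) ≤ 1 - η)]
    · simp only [hf]
      rcases le_total η (1 - η) with h | h
      · rw [min_eq_left h]
        nlinarith [mul_le_mul_of_nonneg_left ha1 h0,
          mul_le_mul_of_nonneg_right hb0 (by linarith : (0:ℝ) ≤ 1 - η - η)]
      · rw [min_eq_right h]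
        nlinarith [mul_le_mul_of_nonneg_left hb1 (by linarith : (0:ℝ) ≤ 1 - η),
          mul_le_mul_of_nonneg_right ha0 (by linarith : (0:ℝ) ≤ η - (1 - η))]
  have hS1 : sInf (f '' {α : ℝ | α * (2 * η - 1) ≤ 0}) = 1 := by
    apply le_antisymm
    · have h0mem : (0:ℝ) ∈ {α : ℝ | α * (2 * η - 1) ≤ 0} := by simp
      have : f 0 = 1 := by simp [hf]
      calc sInf (f '' {α : ℝ | α * (2 * η - 1) ≤ 0}) ≤ f 0 := by
            apply csInf_le ⟨0, ?_⟩ (Set.mem_image_of_mem f h0mem)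
            rintro x ⟨α, hα, rfl⟩
            have := (key α).2
            have hm : (0:ℝ) ≤ min η (1 - η) := le_min h0 (by linarith)
            linarith
        _ = 1 := this
    · apply le_csInf ⟨f 0, Set.mem_image_of_mem f (by simp)⟩
      rintro x ⟨α, hα, rfl⟩
      have := (key α).1
      have hα' : α * (2 * η - 1) ≤ 0 := hα
      linarith
  have hS2 : sInf (f '' Set.univ) = 2 * min η (1 - η) := by
    apply le_antisymm
    · rcases le_total η (1 - η) with h | h
      · rw [min_eq_left h]
        have : f (-1) = 2 * η := by
          simp only [hf]
          rw [show (1:ℝ) - (-1) = 2 by ring, show (1:ℝ) + (-1) = 0 by ring]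
          rw [max_eq_right (by norm_num : (0:ℝ) ≤ 2), max_self]
          ring
        calc sInf (f '' Set.univ) ≤ f (-1) := by
              apply csInf_le ⟨2 * min η (1 - η), ?_⟩ (Set.mem_image_of_mem f (Set.mem_univ _))
              rintro x ⟨α, _, rfl⟩
              exact (key α).2
          _ = 2 * η := this
      · rw [min_eq_right h]
        have : f 1 = 2 * (1 - η) := by
          simp only [hf]
          norm_num
          ring
        calc sInf (f '' Set.univ) ≤ f 1 := by
              apply csInf_le ⟨2 * min η (1 - η), ?_⟩ (Set.mem_image_of_mem f (Set.mem_univ _))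
              rintro x ⟨α, _, rfl⟩
              exact (key α).2
          _ = 2 * (1 - η) := this
    · apply le_csInf ⟨f 0, Set.mem_image_of_mem f (Set.mem_univ _)⟩
      rintro x ⟨α, _, rfl⟩
      exact (key α).2
  rw [hS1, hS2]
  rcases le_total η (1 - η) with h | h
  · rw [min_eq_left h, abs_of_nonpos (by linarith)]
    ring
  · rw [min_eq_right h, abs_of_nonneg (by linarith)]
    ring
end

section
/- For η ∈ [0, 1], one has inf over real α with α(2η − 1) ≤ 0 of [η·e^{−α} + (1−η)·e^{α}] minus inf over all real α of the same expression equals 1 − √(1 − (2η−1)²). Moreover, for z ∈ [−1, 1], 1 − √(1 − z²) ≥ z²/2. -/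
theorem psi_transform_exp (η : ℝ) (hη : η ∈ Set.Icc (0:ℝ) 1) :
    (sInf ((fun α : ℝ => η * Real.exp (-α) + (1 - η) * Real.exp α) ''
        {α : ℝ | α * (2 * η - 1) ≤ 0}) -
      sInf ((fun α : ℝ => η * Real.exp (-α) + (1 - η) * Real.exp α) '' Set.univ) =
      1 - Real.sqrt (1 - (2 * η - 1) ^ 2)) ∧
    ∀ z : ℝ, z ∈ Set.Icc (-1:ℝ) 1 → z ^ 2 / 2 ≤ 1 - Real.sqrt (1 - z ^ 2) := by
  obtain ⟨h0, h1⟩ := hη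
  have h1η : (0:ℝ) ≤ 1 - η := by linarith
  set f : ℝ → ℝ := fun α => η * Real.exp (-α) + (1 - η) * Real.exp α with hf
  set s : ℝ := Real.sqrt (1 - (2 * η - 1) ^ 2) with hsdef
  have hargnn : (0:ℝ) ≤ 1 - (2 * η - 1) ^ 2 := by nlinarith
  have hs0 : 0 ≤ s := Real.sqrt_nonneg _
  have hs2 : s ^ 2 = 1 - (2 * η - 1) ^ 2 := Real.sq_sqrt hargnn
  -- lower bound for the unconstrained objective
  have hlb : ∀ α : ℝ, s ≤ f α := by
    intro α
    have hee : Real.exp (-α) * Real.exp α = 1 := by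
      rw [← Real.exp_add]; simp
    have hp1 := Real.exp_pos α
    have hp2 := Real.exp_pos (-α)
    show s ≤ η * Real.exp (-α) + (1 - η) * Real.exp α
    have hfpos : 0 < η * Real.exp (-α) + (1 - η) * Real.exp α := by
      rcases lt_or_ge 0 η with hp | hp
      · nlinarith [mul_pos hp hp2, mul_nonneg h1η hp1.le]
      · have hη0 : η = 0 := le_antisymm hp h0
        rw [hη0]; simpa using hp1
    have key : s ^ 2 ≤ (η * Real.exp (-α) + (1 - η) * Real.exp α) ^ 2 := by
      nlinarith [sq_nonneg (η * Real.exp (-α) - (1 - η) * Real.exp α), hee, hs2,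
        mul_nonneg h0 h1η]
    nlinarith [key, hfpos, hs0]
  have hbdd : BddBelow (f '' Set.univ) := by
    refine ⟨s, ?_⟩
    rintro y ⟨α, -, rfl⟩
    exact hlb α
  -- constrained inf = 1
  have hc : sInf (f '' {α : ℝ | α * (2 * η - 1) ≤ 0}) = 1 := by
    have hmem : (1:ℝ) ∈ f '' {α : ℝ | α * (2 * η - 1) ≤ 0} := by
      refine ⟨0, by simp, ?_⟩
      simp [hf]
    apply le_antisymm
    · apply csInf_le _ hmem
      refine ⟨1, ?_⟩
      rintro y ⟨α, hα, rfl⟩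
      have e1 := Real.add_one_le_exp (-α)
      have e2 := Real.add_one_le_exp α
      simp only [Set.mem_setOf_eq] at hα
      show 1 ≤ η * Real.exp (-α) + (1 - η) * Real.exp α
      nlinarith [mul_le_mul_of_nonneg_left e1 h0, mul_le_mul_of_nonneg_left e2 h1η]
    · apply le_csInf ⟨1, hmem⟩
      rintro y ⟨α, hα, rfl⟩
      have e1 := Real.add_one_le_exp (-α)
      have e2 := Real.add_one_le_exp α
      simp only [Set.mem_setOf_eq] at hα
      show 1 ≤ η * Real.exp (-α) + (1 - η) * Real.exp α
      nlinarith [mul_le_mul_of_nonneg_left e1 h0, mul_le_mul_of_nonneg_left e2 h1η]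
  -- unconstrained inf = s
  have hu : sInf (f '' Set.univ) = s := by
    apply le_antisymm
    · rcases eq_or_lt_of_le h0 with h0' | h0'
      · -- η = 0, s = 0
        have hse : s = 0 := by
          rw [hsdef, ← h0']; norm_num
        rw [hse]
        refine le_of_forall_pos_le_add ?_
        intro ε hε
        have : f (Real.log ε) = ε := by
          simp [hf, ← h0', Real.exp_log hε]
        calc sInf (f '' Set.univ) ≤ f (Real.log ε) :=
              csInf_le hbdd ⟨Real.log ε, Set.mem_univ _, rfl⟩
          _ = ε := this
          _ ≤ 0 + ε := by linarith
      rcases eq_or_lt_of_le h1 with h1' | h1'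
      · -- η = 1, s = 0
        have hse : s = 0 := by
          rw [hsdef, h1']; norm_num
        rw [hse]
        refine le_of_forall_pos_le_add ?_
        intro ε hε
        have : f (-Real.log ε) = ε := by
          simp [hf, h1', Real.exp_log hε]
        calc sInf (f '' Set.univ) ≤ f (-Real.log ε) :=
              csInf_le hbdd ⟨-Real.log ε, Set.mem_univ _, rfl⟩
          _ = ε := this
          _ ≤ 0 + ε := by linarith
      · -- 0 < η < 1
        have hden : (0:ℝ) < 1 - η := by linarith
        set t : ℝ := Real.sqrt (η / (1 - η)) with htdef
        have htpos : 0 < t := Real.sqrt_pos.mpr (div_pos h0' hden)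
        have ht2 : t ^ 2 = η / (1 - η) := Real.sq_sqrt (div_pos h0' hden).le
        have hst : s * t = 2 * η := by
          rw [hsdef, htdef, ← Real.sqrt_mul hargnn]
          have : (1 - (2 * η - 1) ^ 2) * (η / (1 - η)) = (2 * η) ^ 2 := by
            field_simp; ring
          rw [this, Real.sqrt_sq (by linarith)]
        have hfα : f (Real.log t) = s := by
          have hexp : Real.exp (Real.log t) = t := Real.exp_log htpos
          have hexpn : Real.exp (-Real.log t) = t⁻¹ := by
            rw [Real.exp_neg, hexp]
          have hval : f (Real.log t) * t = 2 * η := by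
            simp only [hf, hexp, hexpn]
            field_simp
            nlinarith [ht2]
          have := hst
          have htne : t ≠ 0 := ne_of_gt htpos
          nlinarith [hval, this]
        calc sInf (f '' Set.univ) ≤ f (Real.log t) :=
              csInf_le hbdd ⟨Real.log t, Set.mem_univ _, rfl⟩
          _ = s := hfα
    · apply le_csInf ((Set.nonempty_of_mem (Set.mem_univ (0:ℝ))).image f)
      rintro y ⟨α, -, rfl⟩
      exact hlb α
  constructor
  · rw [hc, hu]
  · intro z hz
    obtain ⟨hz1, hz2⟩ := hz
    have hzn : (0:ℝ) ≤ 1 - z ^ 2 := by nlinarith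
    have h : Real.sqrt (1 - z ^ 2) ≤ 1 - z ^ 2 / 2 := by
      rw [show (1 - z ^ 2 / 2) = Real.sqrt ((1 - z ^ 2 / 2) ^ 2) from
        (Real.sqrt_sq (by nlinarith)).symm]
      exact Real.sqrt_le_sqrt (by nlinarith)
    linarith
end
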